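/- arXiv:1306.3726 — 2 statements merged into one kernel-verified Lean document; each statement's English description precedes it below -/
import Mathlib

section
/- For every automatic function f (mapping strings over a finite alphabet to strings over a possibly different finite alphabet) there is a deterministic position-faithful one-tape Turing machine which computes f in linear time; indeed, there is a constant c such that the machine halts on each input x in the domain of f within 2·(|x|+c+2) steps. -/
open Classical

/-- A set of strings is regular iff it is accepted by a deterministic finite automaton. -/
def IsRegularLang {γ : Type} (P : Set (List γ)) : Prop :=
  ∃ (Q : Type) (_ : Fintype Q) (M : DFA γ Q), ∀ w, w ∈ M.accepts ↔ w ∈ P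

/-- The convolution of two strings, padding the shorter one with `none` (the symbol □). -/
def convP {α β : Type} (x : List α) (y : List β) : List (Option α × Option β) :=
  (List.range (max x.length y.length)).map fun i => (x[i]?, y[i]?)

/-- Convolution padded with `(none, none)` up to a prescribed length `L`
(this is the convolution of `x·□^*` and `y·□^*`, both padded to length `L`). -/
def convPad {α β : Type} (x : List α) (y : List β) (L : ℕ) : List (Option α × Option β) :=
  (List.range L).map fun i => (x[i]?, y[i]?)

/-- The convolution of three strings. -/
def conv3 {α β γ : Type} (x : List α) (y : List β) (z : List γ) :
    List (Option α × Option β × Option γ) :=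
  (List.range (max x.length (max y.length z.length))).map fun i =>
    (x[i]?, y[i]?, z[i]?)

/-- The convolution of four strings. -/
def conv4 {α β γ δ : Type} (a : List α) (b : List β) (c : List γ) (d : List δ) :
    List (Option α × Option β × Option γ × Option δ) :=
  (List.range (max (max a.length b.length) (max c.length d.length))).map fun i =>
    (a[i]?, b[i]?, getElem? c i, d[i]?)

/-- A partial function on strings is automatic iff its graph of convolutions is regular. -/
def IsAutomatic {α β : Type} (f : List α → Option (List β)) : Prop :=
  IsRegularLang { w | ∃ x y, f x = some y ∧ w = convP x y }

/-- Tape symbols: the left-end marker ⊞, the blank □, or an alphabet symbol. -/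
inductive TSym (Γ : Type) : Type
  | lend : TSym Γ
  | blank : TSym Γ
  | sym : Γ → TSym Γ

/-- Head movement: `true` = one cell to the right, `false` = one cell to the left
(capped at cell 0). -/
def tmove (b : Bool) (h : ℕ) : ℕ := if b then h + 1 else h - 1

/-- The tape holding ⊞ w □ □ ⋯ -/
def listTape {Γ : Type} (w : List Γ) : ℕ → TSym Γ
  | 0 => TSym.lend
  | n + 1 =>
    match w[n]? with
    | some a => TSym.sym a
    | none => TSym.blank

/-- The tape `t` starts with ⊞ w □ (the content beyond the first blank is unconstrained). -/
def TapeStartsWith {Γ : Type} (t : ℕ → TSym Γ) (w : List Γ) : Prop :=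
  t 0 = TSym.lend ∧ (∀ i : Fin w.length, t (i.1 + 1) = TSym.sym (w.get i)) ∧
    t (w.length + 1) = TSym.blank

/-- A configuration of a one-tape Turing machine. -/
structure TMConfig (Q Γ : Type) where
  state : Q
  head : ℕ
  tape : ℕ → TSym Γ

/-- A deterministic position-faithful one-tape Turing machine with input alphabet `α`,
output alphabet `β` and (finite) working alphabet `Γ` into which both embed.  The
left-end marker ⊞ occurs exactly at cell 0: it can never be modified (the head moves
right on reading it) and it is never written elsewhere. -/
structure DPFTM (α β Γ : Type) where
  Q : Type
  finQ : Fintype Q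
  finΓ : Fintype Γ
  inputEmb : α → Γ
  outputEmb : β → Γ
  inputInj : Function.Injective inputEmb
  outputInj : Function.Injective outputEmb
  init : Q
  accept : Q
  reject : Q
  δ : Q → TSym Γ → Q × TSym Γ × Bool
  faithful_end : ∀ q, (δ q TSym.lend).2.1 = TSym.lend ∧ (δ q TSym.lend).2.2 = true
  faithful_noend : ∀ q a, a ≠ TSym.lend → (δ q a).2.1 ≠ TSym.lend

namespace DPFTM

def step {α β Γ : Type} (M : DPFTM α β Γ) (c : TMConfig M.Q Γ) : TMConfig M.Q Γ :=
  ⟨(M.δ c.state (c.tape c.head)).1,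
   tmove (M.δ c.state (c.tape c.head)).2.2 c.head,
   Function.update c.tape c.head (M.δ c.state (c.tape c.head)).2.1⟩

/-- The initial configuration on input `x`: tape ⊞ x □ □ ⋯, head on ⊞. -/
def initConfig {α β Γ : Type} (M : DPFTM α β Γ) (x : List α) : TMConfig M.Q Γ :=
  ⟨M.init, 0, listTape (x.map M.inputEmb)⟩

/-- The configuration after `n` steps on input `x`. -/
def conf {α β Γ : Type} (M : DPFTM α β Γ) (x : List α) (n : ℕ) : TMConfig M.Q Γ :=
  M.step^[n] (M.initConfig x)

/-- The machine has halted (in the accepting or in the rejecting state). -/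
def Halted {α β Γ : Type} (M : DPFTM α β Γ) (c : TMConfig M.Q Γ) : Prop :=
  c.state = M.accept ∨ c.state = M.reject

/-- On input `x` the machine halts, accepting, after exactly `n` steps. -/
def HaltsAcceptAt {α β Γ : Type} (M : DPFTM α β Γ) (x : List α) (n : ℕ) : Prop :=
  (M.conf x n).state = M.accept ∧ ∀ m < n, ¬ M.Halted (M.conf x m)

/-- `M` computes the partial function `f`: for every `x`, `f x = some y` iff `M`,
started on ⊞ x □ □ ⋯, eventually halts in the accepting state with tape content
starting with ⊞ y □. -/
def Computes {α β Γ : Type} (M : DPFTM α β Γ) (f : List α → Option (List β)) : Prop :=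
  ∀ x y, f x = some y ↔
    ∃ n, M.HaltsAcceptAt x n ∧ TapeStartsWith (M.conf x n).tape (y.map M.outputEmb)

/-- There is a constant `c` such that on every input `x` the computation lasts at most
`c·(|x|+1)` steps. -/
def LinearTime {α β Γ : Type} (M : DPFTM α β Γ) : Prop :=
  ∃ c : ℕ, ∀ x : List α, ∃ n ≤ c * (x.length + 1), M.Halted (M.conf x n)

end DPFTM

/-- A non-deterministic position-faithful one-tape Turing machine. -/
structure NPFTM (α β Γ : Type) where
  Q : Type
  finQ : Fintype Q
  finΓ : Fintype Γ
  inputEmb : α → Γ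
  outputEmb : β → Γ
  inputInj : Function.Injective inputEmb
  outputInj : Function.Injective outputEmb
  init : Q
  accept : Q
  reject : Q
  δ : Q → TSym Γ → Set (Q × TSym Γ × Bool)
  faithful_end : ∀ q t, t ∈ δ q TSym.lend → t.2.1 = TSym.lend ∧ t.2.2 = true
  faithful_noend : ∀ q a t, a ≠ TSym.lend → t ∈ δ q a → t.2.1 ≠ TSym.lend

namespace NPFTM

/-- The one-step relation between configurations. -/
def StepRel {α β Γ : Type} (M : NPFTM α β Γ) (c c' : TMConfig M.Q Γ) : Prop :=
  ∃ t ∈ M.δ c.state (c.tape c.head),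
    c' = ⟨t.1, tmove t.2.2 c.head, Function.update c.tape c.head t.2.1⟩

def initConfig {α β Γ : Type} (M : NPFTM α β Γ) (x : List α) : TMConfig M.Q Γ :=
  ⟨M.init, 0, listTape (x.map M.inputEmb)⟩

def Halted {α β Γ : Type} (M : NPFTM α β Γ) (c : TMConfig M.Q Γ) : Prop :=
  c.state = M.accept ∨ c.state = M.reject

/-- `p` is a computation (run) of length `n` of `M` on input `x`: it starts in the
initial configuration, performs `n` steps, and does not halt before step `n`. -/
def IsRun {α β Γ : Type} (M : NPFTM α β Γ) (x : List α) (p : ℕ → TMConfig M.Q Γ)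
    (n : ℕ) : Prop :=
  p 0 = M.initConfig x ∧ ∀ i < n, ¬ M.Halted (p i) ∧ M.StepRel (p i) (p (i + 1))

/-- `M` computes the partial function `f`: `f x = some y` iff some computation of `M`
on `x` halts accepting with tape content starting ⊞ y □.  (In particular any two
accepting computations on the same input produce the same output.) -/
def Computes {α β Γ : Type} (M : NPFTM α β Γ) (f : List α → Option (List β)) : Prop :=
  ∀ x y, f x = some y ↔
    ∃ (p : ℕ → TMConfig M.Q Γ) (n : ℕ), M.IsRun x p n ∧ (p n).state = M.accept ∧
      TapeStartsWith (p n).tape (y.map M.outputEmb)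

/-- Every computation (accepting or not) on input `x` lasts at most `c·(|x|+1)` steps. -/
def LinearTime {α β Γ : Type} (M : NPFTM α β Γ) : Prop :=
  ∃ c : ℕ, ∀ (x : List α) (p : ℕ → TMConfig M.Q Γ) (n : ℕ),
    M.IsRun x p n → n ≤ c * (x.length + 1)

end NPFTM

/-- The length of the longest datum among `T 0, …, T n`. -/
def maxLen {σ : Type} (T : ℕ → List σ) (n : ℕ) : ℕ :=
  (Finset.range (n + 1)).sup fun i => (T i).length

/-- `T` is a text for the language `Lang`: it enumerates exactly the elements of `Lang`. -/
def IsTextFor {σ : Type} (T : ℕ → List σ) (Lang : Set (List σ)) : Prop :=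
  Set.range T = Lang

/-- An automatic family of (nonempty) languages over the alphabet `σ`, indexed by a
regular set of strings over the alphabet `ι`. -/
structure AutoFam (ι σ : Type) [Fintype ι] [Fintype σ] where
  Idx : Set (List ι)
  L : List ι → Set (List σ)
  regIdx : IsRegularLang Idx
  regFam : IsRegularLang { w | ∃ e x, e ∈ Idx ∧ x ∈ L e ∧ w = convP e x }
  nonemptyL : ∀ e ∈ Idx, (L e).Nonempty

/-- An abstract learner: it maps (old memory, new datum) to (new memory, conjecture),
starting from a fixed initial memory. -/
structure PLearner (σ μ ι : Type) where
  minit : List μ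
  lstep : List μ → List σ → List μ × List ι

namespace PLearner

/-- The memory of the learner after having processed `T 0, …, T (n-1)`. -/
def mem {σ μ ι : Type} (M : PLearner σ μ ι) (T : ℕ → List σ) : ℕ → List μ
  | 0 => M.minit
  | n + 1 => (M.lstep (PLearner.mem M T n) (T n)).1

/-- The conjecture of the learner after having processed `T 0, …, T n`. -/
def hyp {σ μ ι : Type} (M : PLearner σ μ ι) (T : ℕ → List σ) (n : ℕ) : List ι :=
  (M.lstep (M.mem T n) (T n)).2

/-- The learner is automatic: the graph of its update function, as a set of
convolutions, is regular. -/
def Automatic {σ μ ι : Type} [Fintype σ] [Fintype μ] [Fintype ι]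
    (M : PLearner σ μ ι) : Prop :=
  IsRegularLang { w | ∃ om dat, w = conv4 om dat (M.lstep om dat).1 (M.lstep om dat).2 }

/-- The memory of the learner is bounded in length by the length of the longest datum
seen so far plus a constant. -/
def MemBounded {σ μ ι : Type} (M : PLearner σ μ ι) : Prop :=
  ∃ c : ℕ, ∀ (T : ℕ → List σ) (n : ℕ), (M.mem T (n + 1)).length ≤ maxLen T n + c

/-- The learner learns the family `(Idx, L)`: on every text for some `L e₀` with
`e₀ ∈ Idx`, its conjectures converge to a fixed index `e ∈ Idx` with `L e = L e₀`. -/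
def Learns {σ μ ι : Type} (M : PLearner σ μ ι)
    (Idx : Set (List ι)) (L : List ι → Set (List σ)) : Prop :=
  ∀ e₀ ∈ Idx, ∀ T : ℕ → List σ, IsTextFor T (L e₀) →
    ∃ e ∈ Idx, L e = L e₀ ∧ ∃ N, ∀ n ≥ N, M.hyp T n = e

end PLearner

/-- An unrestricted learner whose long-term memory is an arbitrary natural number. -/
structure RecLearner (σ ι : Type) where
  minit : ℕ
  lstep : ℕ × List σ → ℕ × List ι

namespace RecLearner

def mem {σ ι : Type} (M : RecLearner σ ι) (T : ℕ → List σ) : ℕ → ℕ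
  | 0 => M.minit
  | n + 1 => (M.lstep (RecLearner.mem M T n, T n)).1

def hyp {σ ι : Type} (M : RecLearner σ ι) (T : ℕ → List σ) (n : ℕ) : List ι :=
  (M.lstep (M.mem T n, T n)).2

/-- The learner is recursive: its update function is computable. -/
def Recursive {σ ι : Type} [Primcodable σ] [Primcodable ι] (M : RecLearner σ ι) : Prop :=
  Computable M.lstep

def Learns {σ ι : Type} (M : RecLearner σ ι)
    (Idx : Set (List ι)) (L : List ι → Set (List σ)) : Prop :=
  ∀ e₀ ∈ Idx, ∀ T : ℕ → List σ, IsTextFor T (L e₀) →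
    ∃ e ∈ Idx, L e = L e₀ ∧ ∃ N, ∀ n ≥ N, M.hyp T n = e

end RecLearner

/-!
Let `D` be a DFA accepting exactly the convolutions `conv(x, f x)`. Sweeping right, the machine
overwrites each input cell by the pair of its symbol and the set of states `D` can reach on the
input read so far, the second track being guessed. Past the input it keeps sweeping over blanks
until this set meets the accepting states; as the set then evolves by a fixed self-map of the
finite type `Set S`, this happens within `|Set S|` blanks or never, and in the latter case the
machine rejects. Sweeping back, the stored sets let it pick, cell by cell, a predecessor state and
a second-track symbol, which it writes down. The written word is accepted by `D`, hence equals
`conv(x, y)` with `f x = y`. Turning at cell `L ≤ |x| + |Set S|`, the run takes `2 L + 3` steps.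
-/

theorem Function.exists_lt_card_iterate_eq {γ : Type*} [Fintype γ] (F : γ → γ) (u : γ)
    (t : ℕ) : ∃ s < Fintype.card γ, F^[s] u = F^[t] u := by
  induction t using Nat.strong_induction_on with
  | _ t ih =>
    by_cases ht : t < Fintype.card γ
    · exact ⟨t, ht, rfl⟩
    obtain ⟨i, j, hne, heq⟩ := Fintype.exists_ne_map_eq_of_card_lt
      (fun i : Fin (Fintype.card γ + 1) => F^[i] u) (by simp)
    obtain ⟨i, j, hij, hj, heq⟩ : ∃ i j : ℕ, i < j ∧ j ≤ t ∧ F^[i] u = F^[j] u := by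
      rcases lt_or_gt_of_ne (Fin.val_ne_of_ne hne) with h | h
      exacts [⟨i, j, h, by omega, heq⟩, ⟨j, i, h, by omega, heq.symm⟩]
    obtain ⟨s, hs, hst⟩ := ih (t - j + i) (by omega)
    refine ⟨s, hs, hst.trans ?_⟩
    rw [Function.iterate_add_apply, heq, ← Function.iterate_add_apply, Nat.sub_add_cancel hj]

namespace DPFTM

variable {α β Γ : Type} (M : DPFTM α β Γ)

theorem step_mk {q q' : M.Q} {h : ℕ} {t : ℕ → TSym Γ} {s : TSym Γ} {d : Bool}
    (hδ : M.δ q (t h) = (q', s, d)) :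
    M.step ⟨q, h, t⟩ = ⟨q', tmove d h, Function.update t h s⟩ := by
  simp [step, hδ]

theorem conf_succ (x : List α) (n : ℕ) : M.conf x (n + 1) = M.step (M.conf x n) :=
  Function.iterate_succ_apply' _ _ _

def HaltsAt (x : List α) (n : ℕ) : Prop :=
  M.Halted (M.conf x n) ∧ ∀ m < n, ¬ M.Halted (M.conf x m)

variable {M}

theorem HaltsAt.unique {x : List α} {n n' : ℕ} (h : M.HaltsAt x n) (h' : M.HaltsAt x n') :
    n = n' := by
  by_contra hne
  rcases lt_or_gt_of_ne hne with hlt | hlt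
  exacts [h'.2 n hlt h.1, h.2 n' hlt h'.1]

theorem HaltsAcceptAt.haltsAt {x : List α} {n : ℕ} (h : M.HaltsAcceptAt x n) :
    M.HaltsAt x n :=
  ⟨Or.inl h.1, h.2⟩

end DPFTM

theorem TapeStartsWith.unique {Γ : Type} {t : ℕ → TSym Γ} {u v : List Γ}
    (hu : TapeStartsWith t u) (hv : TapeStartsWith t v) : u = v := by
  obtain ⟨-, hu, hu'⟩ := hu
  obtain ⟨-, hv, hv'⟩ := hv
  have hlen : u.length = v.length := by
    by_contra hne
    rcases lt_or_gt_of_ne hne with h | h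
    · simpa [hu'] using hv ⟨u.length, h⟩
    · simpa [hv'] using hu ⟨v.length, h⟩
  refine List.ext_get hlen fun i h₁ h₂ => ?_
  simpa [hu ⟨i, h₁⟩] using hv ⟨i, h₂⟩

theorem listTape_succ_of_lt {Γ : Type} {w : List Γ} {j : ℕ} (h : j < w.length) :
    listTape w (j + 1) = .sym w[j] := by
  simp [listTape, h]

theorem listTape_succ_of_le {Γ : Type} {w : List Γ} {j : ℕ} (h : w.length ≤ j) :
    listTape w (j + 1) = .blank := by
  simp [listTape, h]

namespace DFA

variable {α β σ : Type*}

def projFst (D : DFA (α × β) σ) : NFA α σ where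
  step q a := Set.range fun b => D.step q (a, b)
  start := {D.start}
  accept := D.accept

variable {D : DFA (α × β) σ}

theorem mem_projFst_stepSet {R : Set σ} {a : α} {p : σ} :
    p ∈ D.projFst.stepSet R a ↔ ∃ q ∈ R, ∃ b, D.step q (a, b) = p := by
  simp [NFA.mem_stepSet, projFst]

theorem eval_mem_projFst_eval (w : List (α × β)) :
    D.eval w ∈ D.projFst.eval (w.map Prod.fst) := by
  induction w using List.reverseRecOn with
  | nil => simp [projFst]
  | append_singleton w a ih =>
    rw [eval_append_singleton, List.map_append, List.map_singleton, NFA.eval_append_singleton]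
    exact mem_projFst_stepSet.2 ⟨_, ih, a.2, rfl⟩

end DFA

section TwoTrack

variable {α β : Type}

def padded (x : List α) (n : ℕ) : List (Option α) :=
  (List.range n).map fun i => x[i]?

def twoTrack (x : List α) (c : ℕ → Option β) (n : ℕ) : List (Option α × Option β) :=
  (List.range n).map fun i => (x[i]?, c i)

theorem padded_succ (x : List α) (n : ℕ) : padded x (n + 1) = padded x n ++ [x[n]?] := by
  simp [padded, List.range_succ]

theorem map_fst_twoTrack (x : List α) (c : ℕ → Option β) (n : ℕ) :
    (twoTrack x c n).map Prod.fst = padded x n := by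
  simp [twoTrack, padded]

theorem convP_eq_twoTrack (x : List α) (y : List β) :
    convP x y = twoTrack x (fun i => y[i]?) (max x.length y.length) :=
  rfl

theorem drop_twoTrack_eq_cons (x : List α) (c : ℕ → Option β) {n j : ℕ} (h : j < n) :
    (twoTrack x c n).drop j = (x[j]?, c j) :: (twoTrack x c n).drop (j + 1) := by
  rw [List.drop_eq_getElem_cons (by simpa [twoTrack] using h)]
  simp [twoTrack]

theorem drop_succ_twoTrack_update (x : List α) (c : ℕ → Option β) (n j : ℕ) (b : Option β) :
    (twoTrack x (Function.update c j b) n).drop (j + 1) = (twoTrack x c n).drop (j + 1) := by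
  refine List.ext_getElem? fun i => ?_
  by_cases h : j + 1 + i < n
  · simp [twoTrack, List.getElem?_range h, Function.update_of_ne (show j + 1 + i ≠ j by omega)]
  · simp [twoTrack, h]

theorem eq_of_twoTrack_eq_convP {x x' : List α} {c : ℕ → Option β} {y : List β} {n : ℕ}
    (hx : x.length ≤ n) (hc : ∀ i, n ≤ i → c i = none) (h : twoTrack x c n = convP x' y) :
    x' = x ∧ ∀ i, c i = y[i]? := by
  rw [convP_eq_twoTrack] at h
  have hn : n = max x'.length y.length := by simpa [twoTrack] using congrArg List.length h
  have hi : ∀ i < n, x[i]? = x'[i]? ∧ c i = y[i]? := fun i hi => by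
    simpa [twoTrack, hi, ← hn] using congrArg (·[i]?) h
  refine ⟨List.ext_getElem? fun i => ?_, fun i => ?_⟩ <;> by_cases hin : i < n
  · exact (hi i hin).1.symm
  · rw [List.getElem?_eq_none (by omega), List.getElem?_eq_none (by omega)]
  · exact (hi i hin).2
  · rw [hc i (by omega), List.getElem?_eq_none (by omega)]

end TwoTrack

namespace AutomaticTM

variable {α β S : Type} (D : DFA (Option α × Option β) S)

def reach (x : List α) (j : ℕ) : Set S :=
  D.projFst.eval (padded x j)

theorem reach_zero (x : List α) : reach D x 0 = {D.start} :=
  rfl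

theorem reach_succ (x : List α) (j : ℕ) :
    reach D x (j + 1) = D.projFst.stepSet (reach D x j) x[j]? := by
  rw [reach, padded_succ, NFA.eval_append_singleton]
  rfl

theorem eval_twoTrack_mem_reach (x : List α) (c : ℕ → Option β) (j : ℕ) :
    D.eval (twoTrack x c j) ∈ reach D x j := by
  rw [reach, ← map_fst_twoTrack x c]
  exact DFA.eval_mem_projFst_eval _

theorem reach_length_add (x : List α) (t : ℕ) :
    reach D x (x.length + t) =
      (fun R => D.projFst.stepSet R none)^[t] (reach D x x.length) := by
  induction t with
  | zero => rfl
  | succ t ih =>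
    rw [← add_assoc, reach_succ, ih, Function.iterate_succ_apply',
      List.getElem?_eq_none (by omega)]

def CanTurnAt (x : List α) (i : ℕ) : Prop :=
  x.length ≤ i ∧ (reach D x i ∩ D.accept).Nonempty

theorem exists_canTurnAt_of_convP_mem_accepts [Fintype S] {x : List α} {y : List β}
    (h : convP x y ∈ D.accepts) : ∃ i ≤ x.length + Fintype.card (Set S), CanTurnAt D x i := by
  set L := max x.length y.length
  have hL : (reach D x (x.length + (L - x.length)) ∩ D.accept).Nonempty := by
    rw [Nat.add_sub_cancel' (le_max_left _ _)]
    exact ⟨_, eval_twoTrack_mem_reach D x _ L, h⟩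
  rw [reach_length_add] at hL
  obtain ⟨s, hs, hst⟩ := Function.exists_lt_card_iterate_eq _ (reach D x x.length) (L - x.length)
  refine ⟨x.length + s, by omega, by omega, ?_⟩
  rwa [reach_length_add, hst]

abbrev Sym (α β S : Type) : Type := α ⊕ β ⊕ (Option α × Set S)

def pairSym (a : Option α) (R : Set S) : TSym (Sym α β S) := .sym (.inr (.inr (a, R)))

def outSym : Option β → TSym (Sym α β S)
  | some b => .sym (.inr (.inl b))
  | none => .blank

theorem outSym_ne_lend (c : Option β) : outSym c ≠ (.lend : TSym (Sym α β S)) := by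
  cases c <;> simp [outSym]

def pairTape (x : List α) (j : ℕ) (rest : ℕ → TSym (Sym α β S)) : ℕ → TSym (Sym α β S) :=
  fun i => if i = 0 then .lend else if i ≤ j then pairSym x[i - 1]? (reach D x (i - 1)) else rest i

def outTape (c : ℕ → Option β) : ℕ → TSym (Sym α β S) :=
  fun i => outSym (c (i - 1))

variable {D}

theorem pairTape_congr {x : List α} {j : ℕ} {rest rest' : ℕ → TSym (Sym α β S)}
    (h : ∀ i, j < i → rest i = rest' i) : pairTape D x j rest = pairTape D x j rest' := by
  funext i
  by_cases hi : j < i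
  · simp [pairTape, h i hi, show ¬ i ≤ j by omega]
  · simp [pairTape, show i ≤ j by omega]

theorem update_pairTape {x : List α} {j i : ℕ} (hi : j < i) (rest : ℕ → TSym (Sym α β S))
    (s : TSym (Sym α β S)) :
    Function.update (pairTape D x j rest) i s = pairTape D x j (Function.update rest i s) := by
  funext k
  rcases eq_or_ne k i with rfl | hk
  · simp [pairTape, show k ≠ 0 by omega, show ¬ k ≤ j by omega]
  · simp only [Function.update_of_ne hk, pairTape]

theorem pairTape_succ (x : List α) (j : ℕ) (rest : ℕ → TSym (Sym α β S)) :
    pairTape D x (j + 1) rest =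
      Function.update (pairTape D x j rest) (j + 1) (pairSym x[j]? (reach D x j)) := by
  funext i
  rcases eq_or_ne i (j + 1) with rfl | hi
  · simp [pairTape]
  · simp only [Function.update_of_ne hi, pairTape]
    split_ifs <;> first | rfl | omega

theorem pairTape_apply_succ (x : List α) (j : ℕ) (rest : ℕ → TSym (Sym α β S)) :
    pairTape D x j rest (j + 1) = rest (j + 1) := by
  simp [pairTape]

theorem update_pairTape_succ_outSym (x : List α) (j : ℕ) (c : ℕ → Option β) (b : Option β) :
    Function.update (pairTape D x (j + 1) (outTape c)) (j + 1) (outSym b) =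
      pairTape D x j (outTape (Function.update c j b)) := by
  rw [pairTape_succ, Function.update_idem, update_pairTape (Nat.lt_succ_self j)]
  refine pairTape_congr fun i hij => ?_
  rcases eq_or_ne i (j + 1) with rfl | hi
  · simp [outTape]
  · rw [Function.update_of_ne hi, outTape, outTape,
      Function.update_of_ne (show i - 1 ≠ j by omega)]
theorem tapeStartsWith_outTape (x : List α) {c : ℕ → Option β} {y : List β}
    (hc : ∀ i, c i = y[i]?) :
    TapeStartsWith (Function.update (pairTape D x 0 (outTape c)) 0 .lend)
      (y.map (Sum.inr ∘ Sum.inl)) := by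
  refine ⟨by simp, fun i => ?_, ?_⟩
  · have hi : (i : ℕ) < y.length := by simpa using i.2
    simp [pairTape, outTape, outSym, hc, List.getElem?_eq_getElem hi]
  · simp [pairTape, outTape, outSym, hc]

variable (D)

section Machine

variable [Fintype S]

/-- Forward states carry the reach set and the number of blanks read so far; backward states
carry a state of `D`; the last summand holds the halting states. -/
abbrev State (S : Type) [Fintype S] : Type :=
  (Set S × Fin (Fintype.card (Set S) + 1)) ⊕ S ⊕ Bool

def fwd (R : Set S) (t : Fin (Fintype.card (Set S) + 1)) : State S := .inl (R, t)
def bwd (p : S) : State S := .inr (.inl p)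
def acc : State S := .inr (.inr true)
def rej : State S := .inr (.inr false)

noncomputable def transition : State S → TSym (Sym α β S) → State S × TSym (Sym α β S) × Bool
  | .inl (R, t), .lend => (fwd R t, .lend, true)
  | .inl (R, t), .sym (.inl a) => (fwd (D.projFst.stepSet R (some a)) t, pairSym (some a) R, true)
  | .inl (R, t), .blank =>
    if h : (R ∩ D.accept).Nonempty then (bwd h.some, .blank, false)
    else if ht : t.val < Fintype.card (Set S) then
      (fwd (D.projFst.stepSet R none) ⟨t + 1, by omega⟩, pairSym none R, true)
    else (rej, .blank, true)
  | .inr (.inl _), .lend => (acc, .lend, true)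
  | .inr (.inl p), .sym (.inr (.inr (a, R))) =>
    if h : ∃ qb : S × Option β, qb.1 ∈ R ∧ D.step qb.1 (a, qb.2) = p then
      (bwd h.choose.1, outSym h.choose.2, false)
    else (rej, pairSym a R, true)
  | _, s => (rej, s, true)

variable [Fintype α] [Fintype β]

noncomputable abbrev machine : DPFTM α β (Sym α β S) where
  Q := State S
  finQ := inferInstance
  finΓ := inferInstance
  inputEmb := Sum.inl
  outputEmb := Sum.inr ∘ Sum.inl
  inputInj := Sum.inl_injective
  outputInj := Sum.inr_injective.comp Sum.inl_injective
  init := fwd {D.start} 0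
  accept := acc
  reject := rej
  δ := transition D
  faithful_end q := by
    rcases q with ⟨R, t⟩ | p | b <;> simp [transition]
  faithful_noend q s hs := by
    rcases q with ⟨R, t⟩ | p | b <;> rcases s with _ | _ | (a | b | ⟨a, R⟩) <;>
      simp only [transition] <;> (try split_ifs) <;> simp_all [pairSym, outSym_ne_lend]

def FwdAt (x : List α) (j : ℕ) (cfg : TMConfig (machine D).Q (Sym α β S)) : Prop :=
  ∃ t : Fin (Fintype.card (Set S) + 1), t.val = j - x.length ∧
    cfg = ⟨fwd (reach D x j) t, j + 1, pairTape D x j (listTape (x.map Sum.inl))⟩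

def BwdAt (x : List α) (L j : ℕ) (cfg : TMConfig (machine D).Q (Sym α β S)) : Prop :=
  ∃ p c, cfg = ⟨bwd p, j, pairTape D x j (outTape c)⟩ ∧ p ∈ reach D x j ∧
    (∀ i, L ≤ i → c i = none) ∧ D.evalFrom p ((twoTrack x c L).drop j) ∈ D.accept

variable {D}

theorem fwdAt_zero (x : List α) : FwdAt D x 0 ((machine D).conf x 1) := by
  refine ⟨0, by simp, ?_⟩
  rw [DPFTM.conf_succ, DPFTM.conf, Function.iterate_zero_apply, DPFTM.initConfig,
    DPFTM.step_mk _ (q' := fwd {D.start} 0) (s := .lend) (d := true) rfl]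
  congr 1
  funext i
  rcases eq_or_ne i 0 with rfl | hi
  · simp [pairTape]
  · simp [pairTape, hi]

theorem FwdAt.step_of_lt {x : List α} {j : ℕ} {cfg} (h : FwdAt D x j cfg) (hj : j < x.length) :
    FwdAt D x (j + 1) ((machine D).step cfg) := by
  obtain ⟨t, ht, rfl⟩ := h
  have hx : x[j]? = some x[j] := List.getElem?_eq_getElem hj
  refine ⟨t, by omega, ?_⟩
  rw [DPFTM.step_mk _ (q' := fwd (reach D x (j + 1)) t) (s := pairSym x[j]? (reach D x j))
    (d := true)]
  · simp [tmove, pairTape_succ]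
  · rw [pairTape_apply_succ, listTape_succ_of_lt (by simpa using hj), reach_succ, hx]
    simp [transition, fwd]

theorem FwdAt.step_of_not_nonempty {x : List α} {j : ℕ} {cfg} (h : FwdAt D x j cfg)
    (hj : x.length ≤ j) (hbudget : j - x.length < Fintype.card (Set S))
    (hno : ¬ (reach D x j ∩ D.accept).Nonempty) :
    FwdAt D x (j + 1) ((machine D).step cfg) := by
  obtain ⟨t, ht, rfl⟩ := h
  have hx : x[j]? = none := List.getElem?_eq_none hj
  refine ⟨⟨t + 1, by omega⟩, by simp; omega, ?_⟩
  rw [DPFTM.step_mk _ (q' := fwd (reach D x (j + 1)) ⟨t + 1, by omega⟩)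
    (s := pairSym x[j]? (reach D x j)) (d := true)]
  · simp [tmove, pairTape_succ]
  · rw [pairTape_apply_succ, listTape_succ_of_le (by simpa using hj), reach_succ, hx]
    simp only [transition, fwd]
    rw [dif_neg hno, dif_pos (show (t : ℕ) < Fintype.card (Set S) by omega)]

theorem FwdAt.step_state_eq_rej {x : List α} {j : ℕ} {cfg} (h : FwdAt D x j cfg)
    (hj : x.length ≤ j) (hbudget : j - x.length = Fintype.card (Set S))
    (hno : ¬ (reach D x j ∩ D.accept).Nonempty) : ((machine D).step cfg).state = rej := by
  obtain ⟨t, ht, rfl⟩ := h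
  rw [DPFTM.step_mk _ (q' := rej) (s := .blank) (d := true)]
  rw [pairTape_apply_succ, listTape_succ_of_le (by simpa using hj)]
  simp only [transition, fwd]
  rw [dif_neg hno, dif_neg (show ¬ (t : ℕ) < Fintype.card (Set S) by omega)]

theorem FwdAt.step_bwdAt {x : List α} {L : ℕ} {cfg} (h : FwdAt D x L cfg)
    (hL : CanTurnAt D x L) : BwdAt D x L L ((machine D).step cfg) := by
  obtain ⟨t, -, rfl⟩ := h
  obtain ⟨hxL, hne⟩ := hL
  refine ⟨hne.some, fun _ => none, ?_, hne.some_mem.1, fun _ _ => rfl, ?_⟩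
  rw [DPFTM.step_mk _ (q' := bwd hne.some) (s := .blank) (d := false)]
  · simp only [tmove, Bool.false_eq_true, if_false, Nat.add_sub_cancel, TMConfig.mk.injEq,
      true_and]
    rw [update_pairTape (Nat.lt_succ_self L)]
    refine pairTape_congr fun i hi => ?_
    rcases eq_or_ne i (L + 1) with rfl | hi'
    · simp [outTape, outSym]
    · obtain ⟨k, rfl⟩ : ∃ k, i = k + 1 := ⟨i - 1, by omega⟩
      rw [Function.update_of_ne hi', listTape_succ_of_le (by simp; omega)]
      rfl
  · rw [pairTape_apply_succ, listTape_succ_of_le (by simpa using hxL)]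
    simp [transition, fwd, hne]
  · rw [List.drop_of_length_le (by simp [twoTrack])]
    exact hne.some_mem.2

theorem BwdAt.step {x : List α} {L j : ℕ} {cfg} (h : BwdAt D x L (j + 1) cfg) (hj : j < L) :
    BwdAt D x L j ((machine D).step cfg) := by
  obtain ⟨p, c, rfl, hp, hc, hacc⟩ := h
  rw [reach_succ, DFA.mem_projFst_stepSet] at hp
  have hex : ∃ qb : S × Option β, qb.1 ∈ reach D x j ∧ D.step qb.1 (x[j]?, qb.2) = p := by
    obtain ⟨q, hq, b, hqb⟩ := hp
    exact ⟨(q, b), hq, hqb⟩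
  obtain ⟨hq, hqb⟩ := hex.choose_spec
  refine ⟨hex.choose.1, Function.update c j hex.choose.2, ?_, hq, fun i hi => ?_, ?_⟩
  · rw [DPFTM.step_mk _ (q' := bwd hex.choose.1) (s := outSym hex.choose.2) (d := false)]
    · simp [tmove, update_pairTape_succ_outSym]
    · simp [pairTape, transition, bwd, pairSym, hex]
  · rw [Function.update_of_ne (by omega), hc i hi]
  · rw [drop_twoTrack_eq_cons _ _ hj, drop_succ_twoTrack_update, Function.update_self]
    simpa [DFA.evalFrom, hqb] using hacc

theorem BwdAt.step_accept {f : List α → Option (List β)}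
    (hD : ∀ w, w ∈ D.accepts ↔ ∃ x y, f x = some y ∧ w = convP x y)
    {x : List α} {L : ℕ} {cfg} (h : BwdAt D x L 0 cfg) (hL : x.length ≤ L) :
    ∃ y, f x = some y ∧ ((machine D).step cfg).state = acc ∧
      TapeStartsWith ((machine D).step cfg).tape (y.map (machine D).outputEmb) := by
  obtain ⟨p, c, rfl, hp, hc, hacc⟩ := h
  rw [reach_zero, Set.mem_singleton_iff] at hp
  subst hp
  obtain ⟨x', y, hy, hxy⟩ := (hD _).1 (by simpa [DFA.mem_accepts, DFA.eval] using hacc)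
  obtain ⟨hx', hcy⟩ := eq_of_twoTrack_eq_convP hL hc hxy
  refine ⟨y, hx' ▸ hy, ?_⟩
  rw [DPFTM.step_mk _ (q' := acc) (s := .lend) (d := true)]
  · exact ⟨rfl, tapeStartsWith_outTape x hcy⟩
  · simp [pairTape, transition, bwd]

theorem FwdAt.not_halted {x : List α} {j : ℕ} {cfg} (h : FwdAt D x j cfg) :
    ¬ (machine D).Halted cfg := by
  obtain ⟨t, -, rfl⟩ := h
  simp [DPFTM.Halted, fwd, acc, rej]

theorem BwdAt.not_halted {x : List α} {L j : ℕ} {cfg} (h : BwdAt D x L j cfg) :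
    ¬ (machine D).Halted cfg := by
  obtain ⟨p, c, rfl, -⟩ := h
  simp [DPFTM.Halted, bwd, acc, rej]

theorem fwdAt_conf {x : List α} {j : ℕ} (hj : j ≤ x.length + Fintype.card (Set S))
    (hno : ∀ i < j, ¬ CanTurnAt D x i) : FwdAt D x j ((machine D).conf x (j + 1)) := by
  induction j with
  | zero => exact fwdAt_zero x
  | succ j ih =>
    rw [DPFTM.conf_succ]
    have hfwd := ih (by omega) fun i hi => hno i (by omega)
    by_cases hjx : j < x.length
    · exact hfwd.step_of_lt hjx
    · exact hfwd.step_of_not_nonempty (by omega) (by omega)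
        fun hne => hno j (by omega) ⟨by omega, hne⟩

theorem not_halted_conf {x : List α} {j : ℕ} (hj : j ≤ x.length + Fintype.card (Set S))
    (hno : ∀ i < j, ¬ CanTurnAt D x i) {m : ℕ} (hm : m ≤ j + 1) :
    ¬ (machine D).Halted ((machine D).conf x m) := by
  rcases m with _ | m
  · simp [DPFTM.Halted, DPFTM.conf, DPFTM.initConfig, fwd, acc, rej]
  · exact (fwdAt_conf (by omega) fun i hi => hno i (by omega)).not_halted

theorem bwdAt_conf {x : List α} {L : ℕ} (hL : L ≤ x.length + Fintype.card (Set S))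
    (hturn : CanTurnAt D x L) (hno : ∀ i < L, ¬ CanTurnAt D x i) {k : ℕ} (hk : k ≤ L) :
    BwdAt D x L (L - k) ((machine D).conf x (L + 2 + k)) := by
  induction k with
  | zero =>
    rw [show L + 2 + 0 = L + 1 + 1 by rfl, DPFTM.conf_succ]
    exact (fwdAt_conf hL hno).step_bwdAt hturn
  | succ k ih =>
    rw [← add_assoc, DPFTM.conf_succ]
    have hbwd := ih (by omega)
    rw [show L - k = L - (k + 1) + 1 by omega] at hbwd
    exact hbwd.step (by omega)

theorem exists_haltsAcceptAt_of_canTurnAt {f : List α → Option (List β)}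
    (hD : ∀ w, w ∈ D.accepts ↔ ∃ x y, f x = some y ∧ w = convP x y) {x : List α}
    (h : ∃ i ≤ x.length + Fintype.card (Set S), CanTurnAt D x i) :
    ∃ L ≤ x.length + Fintype.card (Set S), ∃ y, f x = some y ∧
      (machine D).HaltsAcceptAt x (2 * L + 3) ∧
      TapeStartsWith ((machine D).conf x (2 * L + 3)).tape (y.map (machine D).outputEmb) := by
  obtain ⟨hLK, hturn⟩ := Nat.find_spec h
  set L := Nat.find h
  have hno : ∀ i < L, ¬ CanTurnAt D x i := fun i hi hi' => Nat.find_min h hi ⟨by omega, hi'⟩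
  have hbwd := bwdAt_conf hLK hturn hno le_rfl
  rw [Nat.sub_self] at hbwd
  obtain ⟨y, hy, hstate, htape⟩ := hbwd.step_accept hD hturn.1
  rw [← DPFTM.conf_succ, show L + 2 + L + 1 = 2 * L + 3 by ring] at hstate htape
  refine ⟨L, hLK, y, hy, ⟨hstate, fun m hm => ?_⟩, htape⟩
  by_cases hmL : m ≤ L + 1
  · exact not_halted_conf hLK hno hmL
  · obtain ⟨k, rfl⟩ : ∃ k, m = L + 2 + k := ⟨m - (L + 2), by omega⟩
    exact (bwdAt_conf hLK hturn hno (by omega)).not_halted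

theorem haltsAt_rej_of_not_canTurnAt {x : List α}
    (h : ¬ ∃ i ≤ x.length + Fintype.card (Set S), CanTurnAt D x i) :
    (machine D).HaltsAt x (x.length + Fintype.card (Set S) + 2) ∧
      ((machine D).conf x (x.length + Fintype.card (Set S) + 2)).state = rej := by
  have hno : ∀ i < x.length + Fintype.card (Set S), ¬ CanTurnAt D x i :=
    fun i hi hturn => h ⟨i, hi.le, hturn⟩
  have hrej : ((machine D).conf x (x.length + Fintype.card (Set S) + 2)).state = rej := by
    rw [DPFTM.conf_succ]
    exact (fwdAt_conf le_rfl hno).step_state_eq_rej (by omega) (by omega)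
      fun hne => h ⟨_, le_rfl, by omega, hne⟩
  exact ⟨⟨Or.inr hrej, fun m hm => not_halted_conf le_rfl hno (by omega)⟩, hrej⟩

variable (D)

theorem machine_computes {f : List α → Option (List β)}
    (hD : ∀ w, w ∈ D.accepts ↔ ∃ x y, f x = some y ∧ w = convP x y) :
    (machine D).Computes f := by
  intro x y
  by_cases h : ∃ i ≤ x.length + Fintype.card (Set S), CanTurnAt D x i
  · obtain ⟨L, -, y', hy', hacc, htape⟩ := exists_haltsAcceptAt_of_canTurnAt hD h
    refine ⟨fun hy => ?_, fun ⟨n, hn, htape'⟩ => ?_⟩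
    · obtain rfl : y = y' := Option.some.inj (hy.symm.trans hy')
      exact ⟨_, hacc, htape⟩
    · obtain rfl := hn.haltsAt.unique hacc.haltsAt
      rwa [List.map_injective_iff.2 (machine D).outputInj (htape'.unique htape)]
  · obtain ⟨hhalt, hrej⟩ := haltsAt_rej_of_not_canTurnAt h
    refine ⟨fun hy => ?_, fun ⟨n, hn, _⟩ => ?_⟩
    · exact absurd (exists_canTurnAt_of_convP_mem_accepts D ((hD _).2 ⟨x, y, hy, rfl⟩)) h
    · obtain rfl := hn.haltsAt.unique hhalt
      exact absurd (hn.1.symm.trans hrej) (by simp [acc, rej])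

theorem machine_linearTime {f : List α → Option (List β)}
    (hD : ∀ w, w ∈ D.accepts ↔ ∃ x y, f x = some y ∧ w = convP x y) :
    (machine D).LinearTime := by
  refine ⟨2 * Fintype.card (Set S) + 3, fun x => ?_⟩
  by_cases h : ∃ i ≤ x.length + Fintype.card (Set S), CanTurnAt D x i
  · obtain ⟨L, hL, -, -, hacc, -⟩ := exists_haltsAcceptAt_of_canTurnAt hD h
    exact ⟨2 * L + 3, by nlinarith, Or.inl hacc.1⟩
  · exact ⟨_, by nlinarith, (haltsAt_rej_of_not_canTurnAt h).1.1⟩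

theorem machine_haltsAcceptAt_le {f : List α → Option (List β)}
    (hD : ∀ w, w ∈ D.accepts ↔ ∃ x y, f x = some y ∧ w = convP x y) {x : List α} {y : List β}
    (hy : f x = some y) :
    ∃ n ≤ 2 * (x.length + Fintype.card (Set S) + 2), (machine D).HaltsAcceptAt x n := by
  obtain ⟨L, hL, -, -, hacc, -⟩ := exists_haltsAcceptAt_of_canTurnAt hD
    (exists_canTurnAt_of_convP_mem_accepts D ((hD _).2 ⟨x, y, hy, rfl⟩))
  exact ⟨2 * L + 3, by omega, hacc⟩

end Machine

end AutomaticTM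

/-- For every automatic function `f` there is a deterministic
position-faithful one-tape Turing machine which computes `f` in linear time; indeed
there is a constant `c` such that the machine halts on each input `x` in the domain of
`f` within `2·(|x|+c+2)` steps. -/
theorem stmt0 {α β : Type} [Fintype α] [Fintype β] (f : List α → Option (List β))
    (hf : IsAutomatic f) :
    ∃ (Γ : Type) (M : DPFTM α β Γ), M.Computes f ∧ M.LinearTime ∧
      ∃ c : ℕ, ∀ x y, f x = some y →
        ∃ n ≤ 2 * (x.length + c + 2), M.HaltsAcceptAt x n := by
  obtain ⟨S, _, D, hD⟩ := hf
  exact ⟨_, AutomaticTM.machine D, AutomaticTM.machine_computes D hD,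
    AutomaticTM.machine_linearTime D hD, Fintype.card (Set S),
    fun _ _ hy => AutomaticTM.machine_haltsAcceptAt_le D hD hy⟩
end

section
/- Let M be a learner (in the model below, with one additional stack) attempting to learn the class ℒ of all languages L_e = {0,1}* − {e} with e ∈ {0,1}*. If there exist two finite sequences σ and τ of binary strings with range(σ) − range(τ) ≠ ∅ and range(τ) − range(σ) ≠ ∅ such that M has the same Tape 0 content and the same stack content after processing σ as after processing τ, then M does not learn ℒ. -/
open Classical

/-- A linear-time learner with a base tape (Tape 0) and `k` additional work tapes.
Tape 0 holds convolutions of strings over `Γ`, the work tapes hold symbols from `Γ`.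
All tapes are one-sided infinite with the unmodifiable left-end marker ⊞ at cell 0. -/
structure TapeLearner (Γ : Type) (k : ℕ) where
  Q : Type
  finQ : Fintype Q
  finΓ : Fintype Γ
  init : Q
  halt : Q
  δ : Q → TSym (Option Γ × Option Γ) → (Fin k → TSym Γ) →
      Q × (TSym (Option Γ × Option Γ) × Bool) × (Fin k → TSym Γ × Bool)
  faithful0_end : ∀ q v, ((δ q TSym.lend v).2.1).1 = TSym.lend ∧
    ((δ q TSym.lend v).2.1).2 = true
  faithful0_noend : ∀ q a v, a ≠ TSym.lend → ((δ q a v).2.1).1 ≠ TSym.lend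
  faithfulk_end : ∀ q a v i, v i = TSym.lend →
    ((δ q a v).2.2 i).1 = TSym.lend ∧ ((δ q a v).2.2 i).2 = true
  faithfulk_noend : ∀ q a v i, v i ≠ TSym.lend → ((δ q a v).2.2 i).1 ≠ TSym.lend

/-- A configuration of a tape learner within one cycle. -/
structure TLConfig (Q Γ : Type) (k : ℕ) where
  state : Q
  t0 : ℕ → TSym (Option Γ × Option Γ)
  h0 : ℕ
  tp : Fin k → ℕ → TSym Γ
  hd : Fin k → ℕ

namespace TapeLearner

def step {Γ : Type} {k : ℕ} (M : TapeLearner Γ k) (c : TLConfig M.Q Γ k) :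
    TLConfig M.Q Γ k :=
  let r := M.δ c.state (c.t0 c.h0) fun i => c.tp i (c.hd i)
  { state := r.1
    t0 := Function.update c.t0 c.h0 r.2.1.1
    h0 := tmove r.2.1.2 c.h0
    tp := fun i => Function.update (c.tp i) (c.hd i) (r.2.2 i).1
    hd := fun i => tmove (r.2.2 i).2 (c.hd i) }

/-- The configuration at the start of a cycle: Tape 0 holds ⊞ conv(dat, mem) □ ⋯ with
its head on ⊞; the work tapes and their head positions persist from the previous cycle. -/
def cycleStart {Γ : Type} {k : ℕ} (M : TapeLearner Γ k) (tp : Fin k → ℕ → TSym Γ)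
    (hd : Fin k → ℕ) (mem dat : List Γ) : TLConfig M.Q Γ k :=
  ⟨M.init, listTape (convP dat mem), 0, tp, hd⟩

/-- One learning cycle: on datum `dat` with old long-term memory `mem` and work tapes
`(tp, hd)`, the machine halts after exactly `t` steps, with Tape 0 starting with
⊞ conv(mem', hyp) □ and with work tapes `(tp', hd')`. -/
def CycleRun {Γ : Type} {k : ℕ} (M : TapeLearner Γ k)
    (tp : Fin k → ℕ → TSym Γ) (hd : Fin k → ℕ) (mem dat : List Γ)
    (tp' : Fin k → ℕ → TSym Γ) (hd' : Fin k → ℕ) (mem' hyp : List Γ) (t : ℕ) : Prop :=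
  let c0 := M.cycleStart tp hd mem dat
  (∀ m < t, (M.step^[m] c0).state ≠ M.halt) ∧ (M.step^[t] c0).state = M.halt ∧
    TapeStartsWith (M.step^[t] c0).t0 (convP mem' hyp) ∧
    (M.step^[t] c0).tp = tp' ∧ (M.step^[t] c0).hd = hd'

/-- The learner learns the family `(Idx, L)` where, with `bound T n` playing the role of
"the length of the longest datum seen so far":  each cycle takes at most
`c·(bound+1)` steps, the long-term memory on Tape 0 and the conjectures have length at
most `bound` plus a constant, and the conjectures converge to a correct index. -/
def LearnsWithBounds {Γ σ ι : Type} {k : ℕ} (M : TapeLearner Γ k)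
    (embσ : σ → Γ) (embι : ι → Γ) (Idx : Set (List ι)) (L : List ι → Set (List σ))
    (bound : (ℕ → List σ) → ℕ → ℕ) : Prop :=
  ∃ c : ℕ, ∀ e₀ ∈ Idx, ∀ T : ℕ → List σ, IsTextFor T (L e₀) →
    ∃ (mem hyp : ℕ → List Γ) (tp : ℕ → Fin k → ℕ → TSym Γ) (hd : ℕ → Fin k → ℕ)
      (t : ℕ → ℕ),
      mem 0 = [] ∧ (∀ i, tp 0 i = listTape ([] : List Γ)) ∧ (∀ i, hd 0 i = 0) ∧
      (∀ n, M.CycleRun (tp n) (hd n) (mem n) ((T n).map embσ)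
        (tp (n + 1)) (hd (n + 1)) (mem (n + 1)) (hyp n) (t n)) ∧
      (∀ n, t n ≤ c * (bound T n + 1)) ∧
      (∀ n, (mem (n + 1)).length ≤ bound T n + c) ∧
      (∀ n, (hyp n).length ≤ bound T n + c) ∧
      (∃ e ∈ Idx, L e = L e₀ ∧ ∃ N, ∀ n ≥ N, hyp n = e.map embι)

/-- Linear-time learning: all resource bounds are in terms of the length of the longest
datum seen so far. -/
def LearnsLin {Γ σ ι : Type} {k : ℕ} (M : TapeLearner Γ k)
    (embσ : σ → Γ) (embι : ι → Γ) (Idx : Set (List ι))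
    (L : List ι → Set (List σ)) : Prop :=
  M.LearnsWithBounds embσ embι Idx L fun T n => maxLen T n

end TapeLearner

/-- An operation on a stack: push a symbol, pop the top symbol, or do nothing. -/
inductive StackOp (Γ : Type) : Type
  | push : Γ → StackOp Γ
  | pop : StackOp Γ
  | skip : StackOp Γ

def applyStackOp {Γ : Type} (op : StackOp Γ) (s : List Γ) : List Γ :=
  match op with
  | StackOp.push a => a :: s
  | StackOp.pop => s.tail
  | StackOp.skip => s

/-- A linear-time learner with a base tape (Tape 0) and `k` additional stacks.
In each step it sees the top symbols of the stacks and may push or pop one symbol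
on each stack. -/
structure StackLearner (Γ : Type) (k : ℕ) where
  Q : Type
  finQ : Fintype Q
  finΓ : Fintype Γ
  init : Q
  halt : Q
  δ : Q → TSym (Option Γ × Option Γ) → (Fin k → Option Γ) →
      Q × (TSym (Option Γ × Option Γ) × Bool) × (Fin k → StackOp Γ)
  faithful0_end : ∀ q v, ((δ q TSym.lend v).2.1).1 = TSym.lend ∧
    ((δ q TSym.lend v).2.1).2 = true
  faithful0_noend : ∀ q a v, a ≠ TSym.lend → ((δ q a v).2.1).1 ≠ TSym.lend

structure SLConfig (Q Γ : Type) (k : ℕ) where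
  state : Q
  t0 : ℕ → TSym (Option Γ × Option Γ)
  h0 : ℕ
  stks : Fin k → List Γ

namespace StackLearner

def step {Γ : Type} {k : ℕ} (M : StackLearner Γ k) (c : SLConfig M.Q Γ k) :
    SLConfig M.Q Γ k :=
  let r := M.δ c.state (c.t0 c.h0) fun i => (c.stks i).head?
  { state := r.1
    t0 := Function.update c.t0 c.h0 r.2.1.1
    h0 := tmove r.2.1.2 c.h0
    stks := fun i => applyStackOp (r.2.2 i) (c.stks i) }

def cycleStart {Γ : Type} {k : ℕ} (M : StackLearner Γ k) (stks : Fin k → List Γ)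
    (mem dat : List Γ) : SLConfig M.Q Γ k :=
  ⟨M.init, listTape (convP dat mem), 0, stks⟩

/-- One learning cycle of a stack learner. -/
def CycleRun {Γ : Type} {k : ℕ} (M : StackLearner Γ k) (stks : Fin k → List Γ)
    (mem dat : List Γ) (stks' : Fin k → List Γ) (mem' hyp : List Γ) (t : ℕ) : Prop :=
  let c0 := M.cycleStart stks mem dat
  (∀ m < t, (M.step^[m] c0).state ≠ M.halt) ∧ (M.step^[t] c0).state = M.halt ∧
    TapeStartsWith (M.step^[t] c0).t0 (convP mem' hyp) ∧
    (M.step^[t] c0).stks = stks'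

def LearnsWithBounds {Γ σ ι : Type} {k : ℕ} (M : StackLearner Γ k)
    (embσ : σ → Γ) (embι : ι → Γ) (Idx : Set (List ι)) (L : List ι → Set (List σ))
    (bound : (ℕ → List σ) → ℕ → ℕ) : Prop :=
  ∃ c : ℕ, ∀ e₀ ∈ Idx, ∀ T : ℕ → List σ, IsTextFor T (L e₀) →
    ∃ (mem hyp : ℕ → List Γ) (stks : ℕ → Fin k → List Γ) (t : ℕ → ℕ),
      mem 0 = [] ∧ (∀ i, stks 0 i = []) ∧
      (∀ n, M.CycleRun (stks n) (mem n) ((T n).map embσ)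
        (stks (n + 1)) (mem (n + 1)) (hyp n) (t n)) ∧
      (∀ n, t n ≤ c * (bound T n + 1)) ∧
      (∀ n, (mem (n + 1)).length ≤ bound T n + c) ∧
      (∀ n, (hyp n).length ≤ bound T n + c) ∧
      (∃ e ∈ Idx, L e = L e₀ ∧ ∃ N, ∀ n ≥ N, hyp n = e.map embι)

def LearnsLin {Γ σ ι : Type} {k : ℕ} (M : StackLearner Γ k)
    (embσ : σ → Γ) (embι : ι → Γ) (Idx : Set (List ι))
    (L : List ι → Set (List σ)) : Prop :=
  M.LearnsWithBounds embσ embι Idx L fun T n => maxLen T n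

/-- Learning without any time or memory bound requirements. -/
def LearnsPlain {Γ σ ι : Type} {k : ℕ} (M : StackLearner Γ k)
    (embσ : σ → Γ) (embι : ι → Γ) (Idx : Set (List ι))
    (L : List ι → Set (List σ)) : Prop :=
  ∀ e₀ ∈ Idx, ∀ T : ℕ → List σ, IsTextFor T (L e₀) →
    ∃ (mem hyp : ℕ → List Γ) (stks : ℕ → Fin k → List Γ) (t : ℕ → ℕ),
      mem 0 = [] ∧ (∀ i, stks 0 i = []) ∧
      (∀ n, M.CycleRun (stks n) (mem n) ((T n).map embσ)
        (stks (n + 1)) (mem (n + 1)) (hyp n) (t n)) ∧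
      (∃ e ∈ Idx, L e = L e₀ ∧ ∃ N, ∀ n ≥ N, hyp n = e.map embι)

end StackLearner

/-- An operation on a queue: optionally enqueue a symbol at the write-end and
optionally dequeue the symbol at the read-end. -/
def applyQueueOp {Γ : Type} (op : Option Γ × Bool) (q : List Γ) : List Γ :=
  (if op.2 then q.tail else q) ++ op.1.toList

/-- A linear-time learner with a base tape (Tape 0) and `k` additional queues.
In each step it sees the front symbols of the queues; on each queue it can enqueue
at most one symbol and dequeue at most one symbol. -/
structure QueueLearner (Γ : Type) (k : ℕ) where
  Q : Type
  finQ : Fintype Q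
  finΓ : Fintype Γ
  init : Q
  halt : Q
  δ : Q → TSym (Option Γ × Option Γ) → (Fin k → Option Γ) →
      Q × (TSym (Option Γ × Option Γ) × Bool) × (Fin k → Option Γ × Bool)
  faithful0_end : ∀ q v, ((δ q TSym.lend v).2.1).1 = TSym.lend ∧
    ((δ q TSym.lend v).2.1).2 = true
  faithful0_noend : ∀ q a v, a ≠ TSym.lend → ((δ q a v).2.1).1 ≠ TSym.lend

structure QLConfig (Q Γ : Type) (k : ℕ) where
  state : Q
  t0 : ℕ → TSym (Option Γ × Option Γ)
  h0 : ℕ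
  qs : Fin k → List Γ

namespace QueueLearner

def step {Γ : Type} {k : ℕ} (M : QueueLearner Γ k) (c : QLConfig M.Q Γ k) :
    QLConfig M.Q Γ k :=
  let r := M.δ c.state (c.t0 c.h0) fun i => (c.qs i).head?
  { state := r.1
    t0 := Function.update c.t0 c.h0 r.2.1.1
    h0 := tmove r.2.1.2 c.h0
    qs := fun i => applyQueueOp (r.2.2 i) (c.qs i) }

def cycleStart {Γ : Type} {k : ℕ} (M : QueueLearner Γ k) (qs : Fin k → List Γ)
    (mem dat : List Γ) : QLConfig M.Q Γ k :=
  ⟨M.init, listTape (convP dat mem), 0, qs⟩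

/-- One learning cycle of a queue learner. -/
def CycleRun {Γ : Type} {k : ℕ} (M : QueueLearner Γ k) (qs : Fin k → List Γ)
    (mem dat : List Γ) (qs' : Fin k → List Γ) (mem' hyp : List Γ) (t : ℕ) : Prop :=
  let c0 := M.cycleStart qs mem dat
  (∀ m < t, (M.step^[m] c0).state ≠ M.halt) ∧ (M.step^[t] c0).state = M.halt ∧
    TapeStartsWith (M.step^[t] c0).t0 (convP mem' hyp) ∧
    (M.step^[t] c0).qs = qs'

def LearnsWithBounds {Γ σ ι : Type} {k : ℕ} (M : QueueLearner Γ k)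
    (embσ : σ → Γ) (embι : ι → Γ) (Idx : Set (List ι)) (L : List ι → Set (List σ))
    (bound : (ℕ → List σ) → ℕ → ℕ) : Prop :=
  ∃ c : ℕ, ∀ e₀ ∈ Idx, ∀ T : ℕ → List σ, IsTextFor T (L e₀) →
    ∃ (mem hyp : ℕ → List Γ) (qs : ℕ → Fin k → List Γ) (t : ℕ → ℕ),
      mem 0 = [] ∧ (∀ i, qs 0 i = []) ∧
      (∀ n, M.CycleRun (qs n) (mem n) ((T n).map embσ)
        (qs (n + 1)) (mem (n + 1)) (hyp n) (t n)) ∧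
      (∀ n, t n ≤ c * (bound T n + 1)) ∧
      (∀ n, (mem (n + 1)).length ≤ bound T n + c) ∧
      (∀ n, (hyp n).length ≤ bound T n + c) ∧
      (∃ e ∈ Idx, L e = L e₀ ∧ ∃ N, ∀ n ≥ N, hyp n = e.map embι)

def LearnsLin {Γ σ ι : Type} {k : ℕ} (M : QueueLearner Γ k)
    (embσ : σ → Γ) (embι : ι → Γ) (Idx : Set (List ι))
    (L : List ι → Set (List σ)) : Prop :=
  M.LearnsWithBounds embσ embι Idx L fun T n => maxLen T n

end QueueLearner

namespace StackLearner

/-- `M.Processes s mem stks hyp`: starting from empty long-term memory and empty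
stacks, processing the finite sequence `s` of data cycle by cycle (each cycle
halting) leaves the learner with Tape-0 memory `mem`, stack contents `stks` and last
conjecture `hyp`. -/
inductive Processes {Γ : Type} (M : StackLearner Γ 1) :
    List (List Γ) → List Γ → (Fin 1 → List Γ) → List Γ → Prop
  | nil : Processes M [] [] (fun _ => []) []
  | snoc {s : List (List Γ)} {mem : List Γ} {stks : Fin 1 → List Γ} {hyp : List Γ}
      {dat mem' hyp' : List Γ} {stks' : Fin 1 → List Γ} {t : ℕ} :
      Processes M s mem stks hyp →
      M.CycleRun stks mem dat stks' mem' hyp' t →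
      Processes M (s ++ [dat]) mem' stks' hyp'

end StackLearner
/-!
A cycle of `M` is determined by the datum, Tape 0 and the stack, so after `σ` and after `τ`
`M` reacts identically to every continuation. Pick `a ∈ range σ − range τ` and
`b ∈ range τ − range σ` and continue both sequences with the same enumeration of
`{0,1}* − {a, b}`. This gives a text for `L_b` and a text for `L_a` on which `M` makes the same
conjectures from then on, so it cannot converge to `b` on the first and to `a` on the second.
-/

lemma convP_getElem?_bind_fst {α β : Type} (x : List α) (y : List β) (i : ℕ) :
    (convP x y)[i]?.bind Prod.fst = x[i]? := by
  by_cases hi : i < max x.length y.length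
  · simp [convP, hi]
  · have : x.length ≤ i := by omega
    simp [convP, hi, this]

lemma convP_getElem?_bind_snd {α β : Type} (x : List α) (y : List β) (i : ℕ) :
    (convP x y)[i]?.bind Prod.snd = y[i]? := by
  by_cases hi : i < max x.length y.length
  · simp [convP, hi]
  · have : y.length ≤ i := by omega
    simp [convP, hi, this]

lemma convP_injective2 {α β : Type} : Function.Injective2 (@convP α β) := fun x x' y y' h =>
  ⟨List.ext_getElem? fun i => by
      rw [← convP_getElem?_bind_fst x y, h, convP_getElem?_bind_fst],
    List.ext_getElem? fun i => by
      rw [← convP_getElem?_bind_snd x y, h, convP_getElem?_bind_snd]⟩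

namespace TapeStartsWith

variable {Γ : Type} {t : ℕ → TSym Γ} {w w' : List Γ}

lemma length_le (h : TapeStartsWith t w) (h' : TapeStartsWith t w') :
    w.length ≤ w'.length := by
  by_contra! hlt
  have := h.2.1 ⟨w'.length, hlt⟩
  rw [h'.2.2] at this
  cases this

lemma unique_s16 (h : TapeStartsWith t w) (h' : TapeStartsWith t w') : w = w' := by
  refine List.ext_get (le_antisymm (h.length_le h') (h'.length_le h)) fun i hi hi' => ?_
  have hsym := (h.2.1 ⟨i, hi⟩).symm.trans (h'.2.1 ⟨i, hi'⟩)
  exact TSym.sym.inj hsym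

end TapeStartsWith

namespace StackLearner

variable {Γ : Type} {k : ℕ} {M : StackLearner Γ k}

lemma CycleRun.unique_s16 {stks stks₁ stks₂ : Fin k → List Γ} {mem dat mem₁ mem₂ hyp₁ hyp₂ : List Γ}
    {t₁ t₂ : ℕ} (h₁ : M.CycleRun stks mem dat stks₁ mem₁ hyp₁ t₁)
    (h₂ : M.CycleRun stks mem dat stks₂ mem₂ hyp₂ t₂) :
    stks₁ = stks₂ ∧ mem₁ = mem₂ ∧ hyp₁ = hyp₂ := by
  obtain ⟨hrun₁, hhalt₁, htape₁, hstks₁⟩ := h₁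
  obtain ⟨hrun₂, hhalt₂, htape₂, hstks₂⟩ := h₂
  obtain rfl : t₁ = t₂ := by
    rcases Nat.lt_trichotomy t₁ t₂ with h | h | h
    · exact absurd hhalt₁ (hrun₂ _ h)
    · exact h
    · exact absurd hhalt₂ (hrun₁ _ h)
  exact ⟨hstks₁.symm.trans hstks₂, convP_injective2 (htape₁.unique_s16 htape₂)⟩

variable (M) in
/-- `mem n`, `stks n` are the Tape-0 memory and the stacks before datum `D n` is read,
`hyp n` is the conjecture after it. -/
def IsRun (D mem hyp : ℕ → List Γ) (stks : ℕ → Fin k → List Γ) : Prop :=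
  ∀ n, ∃ t, M.CycleRun (stks n) (mem n) (D n) (stks (n + 1)) (mem (n + 1)) (hyp n) t

lemma IsRun.hyp_add_eq {D D' mem mem' hyp hyp' : ℕ → List Γ} {stks stks' : ℕ → Fin k → List Γ}
    {p p' : ℕ} (hr : M.IsRun D mem hyp stks) (hr' : M.IsRun D' mem' hyp' stks')
    (hmem : mem p = mem' p') (hstks : stks p = stks' p') (hD : ∀ n, D (p + n) = D' (p' + n))
    (n : ℕ) : hyp (p + n) = hyp' (p' + n) := by
  have cycle_eq : ∀ n, mem (p + n) = mem' (p' + n) → stks (p + n) = stks' (p' + n) →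
      stks (p + n + 1) = stks' (p' + n + 1) ∧ mem (p + n + 1) = mem' (p' + n + 1) ∧
        hyp (p + n) = hyp' (p' + n) := by
    intro n hm hs
    obtain ⟨t, h⟩ := hr (p + n)
    obtain ⟨t', h'⟩ := hr' (p' + n)
    rw [hm, hs, hD n] at h
    exact h.unique_s16 h'
  have state_eq : ∀ n, mem (p + n) = mem' (p' + n) ∧ stks (p + n) = stks' (p' + n) := by
    intro n
    induction n with
    | zero => exact ⟨hmem, hstks⟩
    | succ n ih =>
      obtain ⟨hs, hm, -⟩ := cycle_eq n ih.1 ih.2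
      exact ⟨hm, hs⟩
  exact (cycle_eq n (state_eq n).1 (state_eq n).2).2.2

lemma IsRun.eq_of_processes {M : StackLearner Γ 1} {s : List (List Γ)} {m h : List Γ}
    {st : Fin 1 → List Γ} (hp : M.Processes s m st h) {D mem hyp : ℕ → List Γ}
    {stks : ℕ → Fin 1 → List Γ} (hr : M.IsRun D mem hyp stks) (hmem : mem 0 = [])
    (hstks : stks 0 = fun _ => []) (hD : ∀ i (hi : i < s.length), D i = s[i]) :
    mem s.length = m ∧ stks s.length = st := by
  induction hp with
  | nil => exact ⟨hmem, hstks⟩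
  | @snoc s _ _ _ dat _ _ _ _ _ hcyc ih =>
    obtain ⟨hm, hs⟩ := ih fun i hi => by
      rw [hD i (by simp; omega), List.getElem_append_left]
    obtain ⟨t, h⟩ := hr s.length
    rw [hm, hs, hD _ (by simp), List.getElem_concat_length rfl] at h
    obtain ⟨hs', hm', -⟩ := h.unique_s16 hcyc
    simpa using ⟨hm', hs'⟩

lemma LearnsPlain.exists_isRun {α : Type} {embσ embι : α → Γ}
    (hl : M.LearnsPlain embσ embι Set.univ fun e => {x | x ≠ e}) {T : ℕ → List α}
    {e : List α} (hT : IsTextFor T {x | x ≠ e}) :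
    ∃ mem hyp stks, mem 0 = [] ∧ stks 0 = (fun _ => []) ∧
      M.IsRun (fun n => (T n).map embσ) mem hyp stks ∧ ∃ N, ∀ n ≥ N, hyp n = e.map embι := by
  obtain ⟨mem, hyp, stks, t, hmem, hstks, hcyc, e', -, he', N, hN⟩ := hl e trivial T hT
  obtain rfl : e' = e := by simpa [eq_comm] using congrArg (e ∈ ·) he'
  exact ⟨mem, hyp, stks, hmem, funext hstks, fun n => ⟨t n, hcyc n⟩, N, hN⟩

end StackLearner

lemma Stream'.range_get_append_stream {α : Type} (x : List α) (R : Stream' α) :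
    Set.range (x ++ₛ R).get = {y | y ∈ x} ∪ Set.range R.get := by
  ext y
  constructor
  · rintro ⟨n, rfl⟩
    rcases lt_or_ge n x.length with hn | hn
    · exact Or.inl (by simp [Stream'.get_append_left _ _ _ hn])
    · obtain ⟨m, rfl⟩ := Nat.exists_eq_add_of_le hn
      exact Or.inr ⟨m, (Stream'.get_append_right _ _ _).symm⟩
  · rintro (hy | ⟨m, rfl⟩)
    · obtain ⟨i, hi, rfl⟩ := List.getElem_of_mem hy
      exact ⟨i, Stream'.get_append_left _ _ _ hi⟩
    · exact ⟨x.length + m, Stream'.get_append_right _ _ _⟩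

lemma isTextFor_append_stream {α : Type} {s : List (List α)} {R : Stream' (List α)}
    {a b : List α}
    (hR : Set.range R.get = {a, b}ᶜ) (ha : a ∈ s) (hb : b ∉ s) :
    IsTextFor (s ++ₛ R).get {x | x ≠ b} := by
  have hab : a ≠ b := fun h => hb (h ▸ ha)
  rw [IsTextFor, Stream'.range_get_append_stream, hR]
  ext x
  by_cases hxa : x = a
  · subst hxa
    simp [ha, hab]
  · by_cases hxb : x = b <;> simp_all

theorem stmt16_general {Γ : Type} (M : StackLearner Γ 1)
    (embσ embι : Fin 2 → Γ)
    (hιinj : Function.Injective embι)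
    (σs τs : List (List (Fin 2)))
    (h1 : ∃ w, w ∈ σs ∧ w ∉ τs) (h2 : ∃ w, w ∈ τs ∧ w ∉ σs)
    (mem : List Γ) (stk : Fin 1 → List Γ) (hyp : List Γ)
    (hp1 : M.Processes (σs.map fun w => w.map embσ) mem stk hyp)
    (hp2 : M.Processes (τs.map fun w => w.map embσ) mem stk hyp) :
    ¬ M.LearnsPlain embσ embι (Set.univ : Set (List (Fin 2)))
        (fun e => { x | x ≠ e }) := by
  intro hlearn
  obtain ⟨a, haσ, haτ⟩ := h1
  obtain ⟨b, hbτ, hbσ⟩ := h2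
  obtain ⟨R, hR⟩ : ∃ R : Stream' (List (Fin 2)), {a, b}ᶜ = Set.range R.get :=
    (Set.to_countable _).exists_eq_range (Set.toFinite _).infinite_compl.nonempty
  obtain ⟨memσ, hypσ, stksσ, hmemσ, hstksσ, hrσ, Nσ, hNσ⟩ :=
    hlearn.exists_isRun (isTextFor_append_stream (R := R) hR.symm haσ hbσ)
  obtain ⟨memτ, hypτ, stksτ, hmemτ, hstksτ, hrτ, Nτ, hNτ⟩ :=
    hlearn.exists_isRun (isTextFor_append_stream (R := R) (Set.pair_comm a b ▸ hR.symm) hbτ haτ)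
  obtain ⟨hmσ, hsσ⟩ := hrσ.eq_of_processes hp1 hmemσ hstksσ fun i hi => by
    rw [List.length_map] at hi
    simp only [List.getElem_map, Stream'.get_append_left _ _ _ hi]
  obtain ⟨hmτ, hsτ⟩ := hrτ.eq_of_processes hp2 hmemτ hstksτ fun i hi => by
    rw [List.length_map] at hi
    simp only [List.getElem_map, Stream'.get_append_left _ _ _ hi]
  simp only [List.length_map] at hmσ hsσ hmτ hsτ
  have hyp_eq := hrσ.hyp_add_eq hrτ (hmσ.trans hmτ.symm) (hsσ.trans hsτ.symm)
    (fun n => by simp) (Nσ + Nτ)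
  rw [hNσ _ (by omega), hNτ _ (by omega)] at hyp_eq
  exact hbσ (List.map_injective_iff.2 hιinj hyp_eq ▸ haσ)

/-- let `M` be a learner with one additional stack attempting to learn
the class of all `L_e = {0,1}* − {e}`.  If two finite sequences `σs` and `τs` of binary
strings with `range σs − range τs ≠ ∅` and `range τs − range σs ≠ ∅` leave `M` with the
same Tape-0 content and the same stack content, then `M` does not learn the class. -/
theorem stmt16 {Γ : Type} (M : StackLearner Γ 1)
    (embσ embι : Fin 2 → Γ)
    (hσinj : Function.Injective embσ) (hιinj : Function.Injective embι)
    (σs τs : List (List (Fin 2)))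
    (h1 : ∃ w, w ∈ σs ∧ w ∉ τs) (h2 : ∃ w, w ∈ τs ∧ w ∉ σs)
    (mem : List Γ) (stk : Fin 1 → List Γ) (hyp : List Γ)
    (hp1 : M.Processes (σs.map fun w => w.map embσ) mem stk hyp)
    (hp2 : M.Processes (τs.map fun w => w.map embσ) mem stk hyp) :
    ¬ M.LearnsPlain embσ embι (Set.univ : Set (List (Fin 2)))
        (fun e => { x | x ≠ e }) :=
  stmt16_general M embσ embι hιinj σs τs h1 h2 mem stk hyp hp1 hp2
end
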